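/- Let H be a finite-dimensional complex inner product space, let Π and Δ be orthogonal projections on H, let θ be a real number, and define the partial rotation U(θ) = I − (1 − e^{iθ})(I − Δ). Let ψ ∈ ker Π and set w = (Π − ΠΔΠ)⁺ Δ ψ. Then w ∈ im Π, and U(θ)(ψ + w) = (I − (1 − e^{iθ}) P_{ker Π ∩ ker Δ}) ψ + w. -/

import Mathlib

open LinearMap

/-- The orthogonal projection onto a submodule, as an endomorphism of the ambient space. -/
noncomputable def projL {H : Type*} [NormedAddCommGroup H] [InnerProductSpace ℂ H]
    (K : Submodule ℂ H) [K.HasOrthogonalProjection] : H →ₗ[ℂ] H :=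
  K.subtype ∘ₗ (K.orthogonalProjectionOnto).toLinearMap

/-- The four Moore–Penrose equations: `B` is the Moore–Penrose pseudoinverse of `A`. -/
def IsMPInv {H : Type*} [NormedAddCommGroup H] [InnerProductSpace ℂ H]
    [FiniteDimensional ℂ H] (A B : H →ₗ[ℂ] H) : Prop :=
  A ∘ₗ B ∘ₗ A = A ∧ B ∘ₗ A ∘ₗ B = B ∧
    adjoint (A ∘ₗ B) = A ∘ₗ B ∧ adjoint (B ∘ₗ A) = B ∘ₗ A

/-!
With `A = Π − ΠΔΠ = C C*` for `C = Π(I − Δ)`, the pseudoinverse `B` maps into `im A* = im A ⊆ im Π`,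
and `A B` fixes `im A = im C`. Since `Πψ = 0`, the vector `ΠΔψ = −Cψ` lies in `im C`, and `A` kills
`ker Π`, so `A w = A B (ΠΔψ) = ΠΔψ`, i.e. `w − ΠΔw = ΠΔψ`. This says exactly that
`(I − Δ)(ψ + w)` lies in `ker Π ∩ ker Δ`, while `ψ − (I − Δ)(ψ + w) = Δ(ψ + w) − w` is orthogonal
to it; hence `(I − Δ)(ψ + w) = P_{ker Π ∩ ker Δ} ψ`, and `U(θ)(ψ + w)` follows by expanding `U(θ)`.
-/

open scoped InnerProductSpace

section

variable {H : Type*} [NormedAddCommGroup H] [InnerProductSpace ℂ H] [FiniteDimensional ℂ H]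

namespace IsMPInv

variable {A B : H →ₗ[ℂ] H}

theorem apply_apply_of_mem_range (h : IsMPInv A B) {y : H} (hy : y ∈ range A) :
    A (B y) = y := by
  obtain ⟨x, rfl⟩ := hy
  exact LinearMap.congr_fun h.1 x

theorem range_le_range_adjoint (h : IsMPInv A B) : range B ≤ range (adjoint A) := by
  have hB : B = adjoint A ∘ₗ (adjoint B ∘ₗ B) := by
    calc B = (B ∘ₗ A) ∘ₗ B := h.2.1.symm
      _ = adjoint (B ∘ₗ A) ∘ₗ B := by rw [h.2.2.2]
      _ = adjoint A ∘ₗ (adjoint B ∘ₗ B) := by rw [adjoint_comp, comp_assoc]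
  rw [hB]
  exact range_comp_le_range _ _

theorem ker_adjoint_le_ker_comp (h : IsMPInv A B) : ker (adjoint A) ≤ ker (A ∘ₗ B) := by
  intro v hv
  rw [mem_ker, ← h.2.2.1, adjoint_comp, comp_apply, mem_ker.mp hv, map_zero]

end IsMPInv

variable {P Q : H →ₗ[ℂ] H}

theorem inner_apply_eq_zero_of_adjoint_eq_self (hP : adjoint P = P) (x : H) {z : H}
    (hz : P z = 0) : ⟪P x, z⟫_ℂ = 0 := by
  rw [← adjoint_inner_right, hP, hz, inner_zero_right]

theorem adjoint_sub_comp_comp (hPa : adjoint P = P) (hQa : adjoint Q = Q) :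
    adjoint (P - P ∘ₗ Q ∘ₗ P) = P - P ∘ₗ Q ∘ₗ P := by
  rw [map_sub, adjoint_comp, adjoint_comp, hPa, hQa, comp_assoc]

theorem range_sub_comp_comp (hP : P ∘ₗ P = P) (hPa : adjoint P = P)
    (hQ : Q ∘ₗ Q = Q) (hQa : adjoint Q = Q) :
    range (P - P ∘ₗ Q ∘ₗ P) = range (P ∘ₗ (LinearMap.id - Q)) := by
  have hP' (x : H) : P (P x) = P x := LinearMap.congr_fun hP x
  have hQ' (x : H) : Q (Q x) = Q x := LinearMap.congr_fun hQ x
  have hA : P - P ∘ₗ Q ∘ₗ P =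
      (P ∘ₗ (LinearMap.id - Q)) ∘ₗ adjoint (P ∘ₗ (LinearMap.id - Q)) := by
    rw [adjoint_comp, map_sub, adjoint_id, hPa, hQa]
    ext x
    simp only [comp_apply, LinearMap.sub_apply, id_apply, map_sub, hP', hQ', sub_self, map_zero,
      sub_zero]
  rw [hA, range_self_comp_adjoint]

namespace IsMPInv

variable {B : H →ₗ[ℂ] H}

theorem apply_mem_range_of_sub_comp_comp (hP : P ∘ₗ P = P) (hPa : adjoint P = P)
    (hQ : Q ∘ₗ Q = Q) (hQa : adjoint Q = Q) (hB : IsMPInv (P - P ∘ₗ Q ∘ₗ P) B) (v : H) :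
    B v ∈ range P := by
  have hv := hB.range_le_range_adjoint (mem_range_self B v)
  rw [adjoint_sub_comp_comp hPa hQa, range_sub_comp_comp hP hPa hQ hQa] at hv
  exact range_comp_le_range _ _ hv

theorem sub_comp_comp_apply_apply (hP : P ∘ₗ P = P) (hPa : adjoint P = P)
    (hQ : Q ∘ₗ Q = Q) (hQa : adjoint Q = Q) (hB : IsMPInv (P - P ∘ₗ Q ∘ₗ P) B) {ψ : H}
    (hψ : P ψ = 0) : (P - P ∘ₗ Q ∘ₗ P) (B (Q ψ)) = P (Q ψ) := by
  have hmem : P (Q ψ) ∈ range (P - P ∘ₗ Q ∘ₗ P) := by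
    rw [range_sub_comp_comp hP hPa hQ hQa]
    exact ⟨-ψ, by simp only [comp_apply, LinearMap.sub_apply, id_apply, map_neg, map_sub, hψ,
      zero_sub, neg_neg]⟩
  -- `Q ψ − P (Q ψ) ∈ ker P ⊆ ker A`, and `A B` kills `ker A* = ker A`
  have hker : Q ψ - P (Q ψ) ∈ ker (adjoint (P - P ∘ₗ Q ∘ₗ P)) := by
    have hPv : P (Q ψ - P (Q ψ)) = 0 := by rw [map_sub, ← comp_apply P P, hP, sub_self]
    rw [adjoint_sub_comp_comp hPa hQa, mem_ker, LinearMap.sub_apply, comp_apply, comp_apply, hPv,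
      map_zero, map_zero, sub_zero]
  calc (P - P ∘ₗ Q ∘ₗ P) (B (Q ψ)) = (P - P ∘ₗ Q ∘ₗ P) (B (P (Q ψ))) := by
        rw [← sub_eq_zero, ← map_sub, ← map_sub]
        exact hB.ker_adjoint_le_ker_comp hker
    _ = P (Q ψ) := hB.apply_apply_of_mem_range hmem

end IsMPInv

theorem projL_inf_ker_eq (hPa : adjoint P = P)
    (hQ : Q ∘ₗ Q = Q) (hQa : adjoint Q = Q) {ψ w : H} (hψ : P ψ = 0) (hPw : P w = w)
    (hw : w - P (Q w) = P (Q ψ)) :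
    projL (ker P ⊓ ker Q) ψ = (ψ + w) - Q (ψ + w) := by
  refine Submodule.eq_starProjection_of_mem_of_inner_eq_zero ⟨?_, ?_⟩ ?_
  · change P _ = 0
    rw [map_sub, map_add, map_add, hψ, hPw, map_add, ← hw]
    abel
  · change Q _ = 0
    rw [map_sub, ← comp_apply Q Q, hQ, sub_self]
  · rintro z ⟨hPz, hQz⟩
    rw [show ψ - ((ψ + w) - Q (ψ + w)) = Q (ψ + w) - w by abel, inner_sub_left,
      inner_apply_eq_zero_of_adjoint_eq_self hQa _ hQz, ← hPw,
      inner_apply_eq_zero_of_adjoint_eq_self hPa _ hPz, sub_zero]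

end

theorem stmt1 {H : Type*} [NormedAddCommGroup H] [InnerProductSpace ℂ H]
    [FiniteDimensional ℂ H]
    (Pr Dl : H →ₗ[ℂ] H)
    (hPr : Pr ∘ₗ Pr = Pr) (hPra : adjoint Pr = Pr)
    (hDl : Dl ∘ₗ Dl = Dl) (hDla : adjoint Dl = Dl)
    (θ : ℝ)
    (B : H →ₗ[ℂ] H) (hB : IsMPInv (Pr - Pr ∘ₗ Dl ∘ₗ Pr) B)
    (ψ : H) (hψ : ψ ∈ ker Pr)
    (w : H) (hw : w = B (Dl ψ))
    (U : H →ₗ[ℂ] H)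
    (hU : U = LinearMap.id - (1 - Complex.exp (θ * Complex.I)) • (LinearMap.id - Dl)) :
    w ∈ range Pr ∧
      U (ψ + w) =
        ((LinearMap.id - (1 - Complex.exp (θ * Complex.I)) • projL (ker Pr ⊓ ker Dl) :
          H →ₗ[ℂ] H)) ψ + w := by
  have hψ : Pr ψ = 0 := hψ
  have hw_mem : w ∈ range Pr := hw ▸ hB.apply_mem_range_of_sub_comp_comp hPr hPra hDl hDla _
  have hPw : Pr w = w := by
    obtain ⟨v, rfl⟩ := hw_mem
    exact LinearMap.congr_fun hPr v
  have hAw : w - Pr (Dl w) = Pr (Dl ψ) := by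
    rw [← hB.sub_comp_comp_apply_apply hPr hPra hDl hDla hψ, ← hw]
    simp only [LinearMap.sub_apply, comp_apply, hPw]
  refine ⟨hw_mem, ?_⟩
  rw [hU]
  simp only [LinearMap.sub_apply, LinearMap.smul_apply, id_apply]
  rw [projL_inf_ker_eq hPra hDl hDla hψ hPw hAw]
  abel
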